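/- There is no unique maximal sufficient environment assumption in general. Concretely, let I = {in1, in2} and O = {out}, and let φ ⊆ Σ^ω be the set of words w such that either (there exists k with in1 ∈ w_k and for all j < k, out ∈ w_j) or (there exists k with in2 ∈ w_k and for all j < k, out ∉ w_j) (i.e., φ is the semantics of (out U in1) ∨ (¬out U in2)). Let ψ1 = {w ∈ Σ^ω : ∃k, in1 ∈ w_k} and ψ2 = {w ∈ Σ^ω : ∃k, in2 ∈ w_k}. Then ψ1 and ψ2 are both sufficient environment assumptions for φ, but their union ψ1 ∪ ψ2 is not a sufficient environment assumption for φ. -/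

import Mathlib

open scoped Classical
noncomputable section

/-! ### Transducers -/

/-- A Moore transducer with input alphabet `Set I` and output alphabet `Set O`. -/
structure Moore (I O : Type) where
  Q : Type
  fin : Finite Q
  qI : Q
  tr : Q → Set I → Q
  out : Q → Set O

namespace Moore

variable {I O : Type} (T : Moore I O)

/-- The run of the transducer over an infinite input word. -/
def run (w : ℕ → Set I) : ℕ → T.Q
  | 0 => T.qI
  | i + 1 => T.tr (run w i) (w i)

/-- The infinite word over `Set I × Set O` generated by the run on `w`. -/
def output (w : ℕ → Set I) : ℕ → Set I × Set O :=
  fun i => (w i, T.out (T.run w i))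

/-- The language of the transducer. -/
def lang : Set (ℕ → Set I × Set O) := {x | ∃ w : ℕ → Set I, x = T.output w}

end Moore

/-- A specification is (Moore) realizable if some Moore transducer
implements it. -/
def MooreRealizable {I O : Type} (L : Set (ℕ → Set I × Set O)) : Prop :=
  ∃ T : Moore I O, T.lang ⊆ L

/-- `ψ` is a sufficient environment assumption for `φ` if `ψᶜ ∪ φ` is
(Moore) realizable. -/
def SufficientAssumption {I O : Type} (φ ψ : Set (ℕ → Set I × Set O)) : Prop :=
  MooreRealizable (ψᶜ ∪ φ)

/-! The strategy "always output `out`" wins whenever `in1` eventually arrives, and "never output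
`out`" wins whenever `in2` eventually arrives. Against `ψ1 ∪ ψ2` no strategy works, because a Moore
machine commits to its first output before seeing any input: the environment then sends `in2` from
step 1 on if that output contains `out`, and `in1` from step 1 on otherwise. -/

/-- LTL's strong until `p U q`. -/
def Until {α : Type} (p q : α → Prop) (x : ℕ → α) : Prop :=
  ∃ k, q (x k) ∧ ∀ j < k, p (x j)

namespace Until

variable {α : Type} {p q : α → Prop} {x : ℕ → α}

theorem of_forall (hq : ∃ k, q (x k)) (hp : ∀ j, p (x j)) : Until p q x :=
  let ⟨k, hk⟩ := hq; ⟨k, hk, fun j _ => hp j⟩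

theorem exists_right (h : Until p q x) : ∃ k, q (x k) :=
  let ⟨k, hk, _⟩ := h; ⟨k, hk⟩

theorem head (h : Until p q x) (h0 : ¬ q (x 0)) : p (x 0) := by
  obtain ⟨k, hk, hp⟩ := h
  rcases Nat.eq_zero_or_pos k with rfl | hpos
  · exact absurd hk h0
  · exact hp 0 hpos

end Until

namespace Moore

variable {I O : Type}

def const (o : Set O) : Moore I O :=
  ⟨Unit, inferInstance, (), fun _ _ => (), fun _ => o⟩

theorem output_zero_snd (T : Moore I O) (w : ℕ → Set I) : (T.output w 0).2 = T.out T.qI :=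
  rfl

end Moore

section

variable {I O : Type}

theorem mooreRealizable_of_const {L : Set (ℕ → Set I × Set O)} (o : Set O)
    (h : ∀ w : ℕ → Set I, (fun i => (w i, o)) ∈ L) : MooreRealizable L :=
  ⟨Moore.const o, by rintro _ ⟨w, rfl⟩; exact h w⟩

/-- The specification `(out U a) ∨ (¬out U b)`. -/
def untilSpec (a b : I) (out : O) : Set (ℕ → Set I × Set O) :=
  {x | Until (out ∈ ·.2) (a ∈ ·.1) x ∨ Until (out ∉ ·.2) (b ∈ ·.1) x}

def eventuallyIn (a : I) : Set (ℕ → Set I × Set O) :=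
  {x | ∃ k, a ∈ (x k).1}

theorem sufficientAssumption_eventuallyIn_left (a b : I) (out : O) :
    SufficientAssumption (untilSpec a b out) (eventuallyIn a) := by
  refine mooreRealizable_of_const Set.univ fun w => ?_
  by_cases ha : ∃ k, a ∈ w k
  · exact Or.inr (Or.inl (Until.of_forall ha fun _ => Set.mem_univ out))
  · exact Or.inl ha

theorem sufficientAssumption_eventuallyIn_right (a b : I) (out : O) :
    SufficientAssumption (untilSpec a b out) (eventuallyIn b) := by
  refine mooreRealizable_of_const ∅ fun w => ?_
  by_cases hb : ∃ k, b ∈ w k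
  · exact Or.inr (Or.inr (Until.of_forall hb fun _ => Set.notMem_empty out))
  · exact Or.inl hb

def fromOne (c : I) : ℕ → Set I :=
  fun n => if n = 0 then ∅ else {c}

theorem mem_fromOne_iff {c d : I} {n : ℕ} : d ∈ fromOne c n ↔ n ≠ 0 ∧ d = c := by
  unfold fromOne
  split_ifs <;> simp [*]

theorem notMem_fromOne_zero (c d : I) : d ∉ fromOne c 0 :=
  fun h => (mem_fromOne_iff.mp h).1 rfl

theorem not_sufficientAssumption_union {a b : I} (hab : a ≠ b) (out : O) :
    ¬ SufficientAssumption (untilSpec a b out) (eventuallyIn a ∪ eventuallyIn b) := by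
  rintro ⟨T, hT⟩
  have sent {c : I} : T.output (fromOne c) ∈ eventuallyIn a ∪ eventuallyIn b →
      T.output (fromOne c) ∈ untilSpec a b out := fun hc =>
    (hT ⟨fromOne c, rfl⟩).resolve_left (not_not.mpr hc)
  by_cases h0 : out ∈ T.out T.qI
  · rcases sent (c := b) (Or.inr ⟨1, mem_fromOne_iff.mpr ⟨one_ne_zero, rfl⟩⟩) with hU | hU
    · obtain ⟨k, hk⟩ := hU.exists_right
      exact hab (mem_fromOne_iff.mp hk).2
    · exact hU.head (notMem_fromOne_zero b b) (Moore.output_zero_snd T _ ▸ h0)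
  · rcases sent (c := a) (Or.inl ⟨1, mem_fromOne_iff.mpr ⟨one_ne_zero, rfl⟩⟩) with hU | hU
    · exact h0 (Moore.output_zero_snd T _ ▸ hU.head (notMem_fromOne_zero a a))
    · obtain ⟨k, hk⟩ := hU.exists_right
      exact hab (mem_fromOne_iff.mp hk).2.symm

end

theorem no_unique_maximal_sufficient_assumption
    (φ ψ1 ψ2 : Set (ℕ → Set (Fin 2) × Set Unit))
    (hφ : φ = {w | (∃ k : ℕ, (0 : Fin 2) ∈ (w k).1 ∧ ∀ j < k, () ∈ (w j).2) ∨
      (∃ k : ℕ, (1 : Fin 2) ∈ (w k).1 ∧ ∀ j < k, () ∉ (w j).2)})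
    (hψ1 : ψ1 = {w | ∃ k : ℕ, (0 : Fin 2) ∈ (w k).1})
    (hψ2 : ψ2 = {w | ∃ k : ℕ, (1 : Fin 2) ∈ (w k).1}) :
    SufficientAssumption φ ψ1 ∧ SufficientAssumption φ ψ2 ∧
    ¬ SufficientAssumption φ (ψ1 ∪ ψ2) := by
  obtain rfl : φ = untilSpec 0 1 () := hφ
  obtain rfl : ψ1 = eventuallyIn 0 := hψ1
  obtain rfl : ψ2 = eventuallyIn 1 := hψ2
  exact ⟨sufficientAssumption_eventuallyIn_left 0 1 (),
    sufficientAssumption_eventuallyIn_right 0 1 (),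
    not_sufficientAssumption_union zero_ne_one ()⟩
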